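/- arXiv:2508.07564 — 4 statements merged into one kernel-verified Lean document; each statement's English description precedes it below -/
import Mathlib

section
/- There are no x, y, z ∈ Q_3 satisfying y^2 - 5z^2 = (3/5)(5x^4 + 7x^2 + 1); i.e., the Châtelet surface y^2 - 5z^2 = (3/5)(5t^4 + 7t^2 + 1) has no Q_3-points in its affine chart. -/
lemma norm_one_of_toZMod_ne_zero (a : ℤ_[3]) (h : PadicInt.toZMod a ≠ 0) : ‖a‖ = 1 := by
  rcases lt_or_eq_of_le a.norm_le_one with hlt | he
  · exfalso
    apply h
    rw [← RingHom.mem_ker, PadicInt.ker_toZMod, PadicInt.maximalIdeal_eq_span_p,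
      Ideal.mem_span_singleton, ← PadicInt.norm_lt_one_iff_dvd]
    exact hlt
  · exact he

lemma toZMod_ne_zero_of_norm_one (a : ℤ_[3]) (h : ‖a‖ = 1) : PadicInt.toZMod a ≠ 0 := by
  intro h0
  rw [← RingHom.mem_ker, PadicInt.ker_toZMod, PadicInt.maximalIdeal_eq_span_p,
    Ideal.mem_span_singleton, ← PadicInt.norm_lt_one_iff_dvd] at h0
  rw [h] at h0; exact lt_irrefl 1 h0

lemma l1 (w : ℚ_[3]) (hw : ‖w‖ = 1) : ‖1 - 5 * w ^ 2‖ = 1 := by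
  set W : ℤ_[3] := ⟨w, le_of_eq hw⟩ with hW
  have hco : ((1 - 5 * W ^ 2 : ℤ_[3]) : ℚ_[3]) = 1 - 5 * w ^ 2 := by push_cast [hW]; rfl
  rw [← hco, ← PadicInt.norm_def]
  apply norm_one_of_toZMod_ne_zero
  have hWn : PadicInt.toZMod W ≠ 0 := toZMod_ne_zero_of_norm_one W (by rw [PadicInt.norm_def]; exact hw)
  have : PadicInt.toZMod (1 - 5 * W ^ 2) = 1 - 5 * (PadicInt.toZMod W) ^ 2 := by
    simp [map_sub, map_mul, map_pow, map_one, map_ofNat]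
  rw [this]
  revert hWn
  generalize PadicInt.toZMod W = a
  revert a; decide

lemma l2 (w : ℚ_[3]) (hw : ‖w‖ ≤ 1) : ‖5 * w ^ 4 + 7 * w ^ 2 + 1‖ = 1 := by
  set W : ℤ_[3] := ⟨w, hw⟩ with hW
  have hco : ((5 * W ^ 4 + 7 * W ^ 2 + 1 : ℤ_[3]) : ℚ_[3]) = 5 * w ^ 4 + 7 * w ^ 2 + 1 := by
    push_cast [hW]; rfl
  rw [← hco, ← PadicInt.norm_def]
  apply norm_one_of_toZMod_ne_zero
  have : PadicInt.toZMod (5 * W ^ 4 + 7 * W ^ 2 + 1)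
      = 5 * (PadicInt.toZMod W) ^ 4 + 7 * (PadicInt.toZMod W) ^ 2 + 1 := by
    simp [map_add, map_mul, map_pow, map_one, map_ofNat]
  rw [this]
  generalize PadicInt.toZMod W = a
  revert a; decide

lemma l3 (w : ℚ_[3]) (hw : ‖w‖ ≤ 1) : ‖w ^ 4 + 7 * w ^ 2 + 5‖ = 1 := by
  set W : ℤ_[3] := ⟨w, hw⟩ with hW
  have hco : ((W ^ 4 + 7 * W ^ 2 + 5 : ℤ_[3]) : ℚ_[3]) = w ^ 4 + 7 * w ^ 2 + 5 := by
    push_cast [hW]; rfl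
  rw [← hco, ← PadicInt.norm_def]
  apply norm_one_of_toZMod_ne_zero
  have : PadicInt.toZMod (W ^ 4 + 7 * W ^ 2 + 5)
      = (PadicInt.toZMod W) ^ 4 + 7 * (PadicInt.toZMod W) ^ 2 + 5 := by
    simp [map_add, map_mul, map_pow, map_ofNat]
  rw [this]
  generalize PadicInt.toZMod W = a
  revert a; decide

lemma norm5 : ‖(5 : ℚ_[3])‖ = 1 := by
  have := l3 (0 : ℚ_[3]) (by simp)
  simpa using this

lemma norm3 : ‖(3 : ℚ_[3])‖ = (3 : ℝ)⁻¹ := by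
  have h : ((3 : ℕ) : ℚ_[3]) = (3 : ℚ_[3]) := by norm_num
  rw [← h, Padic.norm_p]
  norm_num

lemma normval (x : ℚ_[3]) (hx : x ≠ 0) : ‖x‖ = (3 : ℝ) ^ (-x.valuation) := by
  rw [Padic.norm_eq_zpow_neg_valuation hx]
  norm_num

/-- The Châtelet surface y² - 5z² = (3/5)(5t⁴ + 7t² + 1) has no ℚ₃-points in its
affine chart: there are no x, y, z ∈ ℚ₃ satisfying the equation. -/
theorem no_Q3_points (x y z : ℚ_[3]) :
    y ^ 2 - 5 * z ^ 2 ≠ (3 / 5) * (5 * x ^ 4 + 7 * x ^ 2 + 1) := by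
  intro heq
  -- RHS norm : 3 ^ (2*m - 1)
  obtain ⟨m, hm⟩ : ∃ m : ℤ, ‖5 * x ^ 4 + 7 * x ^ 2 + 1‖ = (3 : ℝ) ^ (2 * m) := by
    rcases le_or_gt ‖x‖ 1 with hx | hx
    · exact ⟨0, by rw [l2 x hx]; norm_num⟩
    · have hx0 : x ≠ 0 := by rintro rfl; simp at hx; linarith
      have hinv : ‖x⁻¹‖ ≤ 1 := by
        rw [norm_inv]; exact inv_le_one_of_one_le₀ (le_of_lt hx)
      have hfact : 5 * x ^ 4 + 7 * x ^ 2 + 1 = x ^ 4 * ((x⁻¹) ^ 4 + 7 * (x⁻¹) ^ 2 + 5) := by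
        field_simp; ring
      refine ⟨-2 * x.valuation, ?_⟩
      rw [hfact, norm_mul, l3 _ hinv, mul_one, norm_pow, normval x hx0,
        ← zpow_natCast ((3:ℝ) ^ (-x.valuation)) 4, ← zpow_mul]
      congr 1; push_cast; ring
  have hRHS : ‖(3 / 5 : ℚ_[3]) * (5 * x ^ 4 + 7 * x ^ 2 + 1)‖ = (3 : ℝ) ^ (2 * m - 1) := by
    rw [norm_mul, norm_div, norm3, norm5, hm, div_one,
      zpow_sub₀ (by norm_num : (3:ℝ) ≠ 0)]
    norm_num
    ring
  have hLR : ‖y ^ 2 - 5 * z ^ 2‖ = (3 : ℝ) ^ (2 * m - 1) := by rw [heq, hRHS]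
  have hne0 : y ^ 2 - 5 * z ^ 2 ≠ 0 := by
    intro h0
    have hpos : (0:ℝ) < (3:ℝ) ^ (2 * m - 1) := by positivity
    rw [h0, norm_zero] at hLR
    exact absurd hLR.symm hpos.ne'
  -- LHS norm : 3 ^ (2*k)
  obtain ⟨k, hk⟩ : ∃ k : ℤ, ‖y ^ 2 - 5 * z ^ 2‖ = (3 : ℝ) ^ (2 * k) := by
    have hz5 : ‖5 * z ^ 2‖ = ‖z‖ ^ 2 := by rw [norm_mul, norm5, norm_pow, one_mul]
    rcases lt_trichotomy ‖y‖ ‖z‖ with h | h | h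
    · have hz0 : z ≠ 0 := by
        rintro rfl; simp at h; exact absurd h (norm_nonneg y).not_gt
      have hne : ‖y ^ 2‖ ≠ ‖-(5 * z ^ 2)‖ := by
        rw [norm_neg, hz5, norm_pow]
        exact ne_of_lt (by nlinarith [norm_nonneg y, norm_nonneg z])
      have hmax := Padic.add_eq_max_of_ne hne
      rw [← sub_eq_add_neg] at hmax
      refine ⟨-z.valuation, ?_⟩
      rw [hmax, norm_neg, hz5, norm_pow,
        max_eq_right (by nlinarith [norm_nonneg y, norm_nonneg z] : ‖y‖^2 ≤ ‖z‖^2),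
        normval z hz0, ← zpow_natCast ((3:ℝ) ^ (-z.valuation)) 2, ← zpow_mul]
      congr 1; push_cast; ring
    · rcases eq_or_ne y 0 with rfl | hy0
      · exfalso
        have hz : z = 0 := by
          have : ‖z‖ = 0 := by simpa using h.symm
          rwa [norm_eq_zero] at this
        apply hne0; simp [hz]
      · have hfac : y ^ 2 - 5 * z ^ 2 = y ^ 2 * (1 - 5 * (z / y) ^ 2) := by
          field_simp
        have hyn : ‖y‖ ≠ 0 := by simpa [norm_eq_zero] using hy0
        have hzy : ‖z / y‖ = 1 := by rw [norm_div, ← h, div_self hyn]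
        refine ⟨-y.valuation, ?_⟩
        rw [hfac, norm_mul, l1 _ hzy, mul_one, norm_pow, normval y hy0,
          ← zpow_natCast ((3:ℝ) ^ (-y.valuation)) 2, ← zpow_mul]
        congr 1; push_cast; ring
    · have hy0 : y ≠ 0 := by
        rintro rfl; simp at h; exact absurd h (norm_nonneg z).not_gt
      have hne : ‖y ^ 2‖ ≠ ‖-(5 * z ^ 2)‖ := by
        rw [norm_neg, hz5, norm_pow]
        exact ne_of_gt (by nlinarith [norm_nonneg y, norm_nonneg z])
      have hmax := Padic.add_eq_max_of_ne hne
      rw [← sub_eq_add_neg] at hmax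
      refine ⟨-y.valuation, ?_⟩
      rw [hmax, norm_neg, hz5, norm_pow,
        max_eq_left (by nlinarith [norm_nonneg y, norm_nonneg z] : ‖z‖^2 ≤ ‖y‖^2),
        normval y hy0, ← zpow_natCast ((3:ℝ) ^ (-y.valuation)) 2, ← zpow_mul]
      congr 1; push_cast; ring
  rw [hLR] at hk
  have := zpow_right_injective₀ (by norm_num : (0:ℝ) < 3) (by norm_num : (3:ℝ) ≠ 1) hk
  omega
end

section
/- Let s ∈ Z_5 with s^2 = 29 and s ≡ 2 (mod 5), and α = (7+s)/10 ∈ Q_5. Then for every t ∈ Q_5 with v_5(t) ≥ 0, the element 10(t^2 + α) is a nonzero square in Q_5. -/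
/-!
With `u = t ∈ ℤ₅`, the element `10 (t² + α) = 10 u² + 7 + s` is a 5-adic integer congruent to
`0 + 7 + 2 ≡ 2²` modulo 5, so Hensel's lemma lifts the residue square root `2` to a square
root in `ℤ₅`.
-/

instance : Fact (Nat.Prime 5) := ⟨by norm_num⟩

namespace PadicInt

open Polynomial

variable {p : ℕ} [Fact p.Prime]

theorem toZMod_eq_zero_iff_norm_lt_one {x : ℤ_[p]} : toZMod x = 0 ↔ ‖x‖ < 1 := by
  rw [← RingHom.mem_ker, ker_toZMod, IsLocalRing.mem_maximalIdeal, mem_nonunits]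

theorem norm_eq_one_of_toZMod_ne_zero {x : ℤ_[p]} (hx : toZMod x ≠ 0) : ‖x‖ = 1 :=
  x.norm_le_one.eq_of_not_lt (mt toZMod_eq_zero_iff_norm_lt_one.2 hx)

/-- Hensel's lemma for `X ^ 2 - x` at a lift `r` of a square root mod `p`:
`‖r ^ 2 - x‖ < 1 = ‖2 * r‖ ^ 2` since `p` is odd and `x` is a unit. -/
theorem isSquare_of_isSquare_toZMod (hp : p ≠ 2) {x : ℤ_[p]} (hx₀ : toZMod x ≠ 0)
    (hx : IsSquare (toZMod x)) : IsSquare x := by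
  obtain ⟨a, ha⟩ := hx
  obtain ⟨r, rfl⟩ := ZMod.natCast_zmod_surjective a
  have hr : toZMod (r : ℤ_[p]) = r := map_natCast _ r
  have htwo : (2 : ZMod p) ≠ 0 := Ring.two_ne_zero (by rwa [ZMod.ringChar_zmod_n])
  have hr₀ : (r : ZMod p) ≠ 0 := fun h ↦ hx₀ (by rw [ha, h, zero_mul])
  have hres : ‖(r : ℤ_[p]) ^ 2 - x‖ < 1 := by
    rw [← toZMod_eq_zero_iff_norm_lt_one, map_sub, map_pow, hr, ha, sq, sub_self]
  have hderiv : ‖2 * (r : ℤ_[p])‖ = 1 := by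
    refine norm_eq_one_of_toZMod_ne_zero ?_
    rw [map_mul, map_ofNat, hr]
    exact mul_ne_zero htwo hr₀
  have hnorm : ‖(X ^ 2 - C x).aeval (r : ℤ_[p])‖ <
      ‖(X ^ 2 - C x).derivative.aeval (r : ℤ_[p])‖ ^ 2 := by
    simpa only [map_sub, map_pow, aeval_X, aeval_C, Algebra.algebraMap_self, RingHom.id_apply,
      derivative_sub, derivative_X_sq, derivative_C, sub_zero, map_mul,
      hderiv, one_pow] using hres
  obtain ⟨z, hz, -⟩ := hensels_lemma hnorm
  refine ⟨z, ?_⟩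
  simp only [map_sub, map_pow, aeval_X, aeval_C, Algebra.algebraMap_self, RingHom.id_apply,
    sub_eq_zero] at hz
  rw [← hz, sq]

end PadicInt

theorem ten_t_sq_add_alpha_square_general (s : ℤ_[5])
    (hs2 : PadicInt.toZMod s = 2) (t : ℚ_[5]) (ht : 0 ≤ t.valuation) :
    10 * (t ^ 2 + (7 + (s : ℚ_[5])) / 10) ≠ 0 ∧
      IsSquare (10 * (t ^ 2 + (7 + (s : ℚ_[5])) / 10)) := by
  set u : ℤ_[5] := ⟨t, (Padic.norm_le_one_iff_val_nonneg t).2 ht⟩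
  set b : ℤ_[5] := 10 * u ^ 2 + 7 + s
  have hb : 10 * (t ^ 2 + (7 + (s : ℚ_[5])) / 10) = (b : ℚ_[5]) := by
    have hb_coe : (b : ℚ_[5]) = 10 * t ^ 2 + 7 + s := rfl
    rw [hb_coe]
    field_simp
    ring
  have hb_mod : PadicInt.toZMod b = 2 ^ 2 := by
    simp only [b, map_add, map_mul, map_pow, map_ofNat, hs2]
    rw [show (10 : ZMod 5) = 0 by decide, zero_mul, zero_add]
    decide
  have hb₀ : PadicInt.toZMod b ≠ 0 := by rw [hb_mod]; decide
  obtain ⟨z, hz⟩ := PadicInt.isSquare_of_isSquare_toZMod (by norm_num) hb₀ ⟨2, by rw [hb_mod, sq]⟩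
  refine ⟨?_, ⟨z, ?_⟩⟩
  · rw [hb, PadicInt.coe_ne_zero]
    exact fun h ↦ hb₀ (by rw [h, map_zero])
  · rw [hb, hz]
    push_cast
    rfl

/-- Let s ∈ ℤ₅ with s² = 29 and s ≡ 2 (mod 5), and α = (7+s)/10 ∈ ℚ₅.  Then for
every t ∈ ℚ₅ with v₅(t) ≥ 0, the element 10(t² + α) is a nonzero square in ℚ₅. -/
theorem ten_t_sq_add_alpha_square (s : ℤ_[5]) (hs : s ^ 2 = 29)
    (hs2 : PadicInt.toZMod s = 2) (t : ℚ_[5]) (ht : 0 ≤ t.valuation) :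
    10 * (t ^ 2 + (7 + (s : ℚ_[5])) / 10) ≠ 0 ∧
      IsSquare (10 * (t ^ 2 + (7 + (s : ℚ_[5])) / 10)) :=
  ten_t_sq_add_alpha_square_general s hs2 t ht
end

section
/- Let s ∈ Z_5 with s^2 = 29 and s ≡ 3 (mod 5), and let ᾱ = (7 − s)/10 ∈ Q_5 (so v_5(ᾱ) = −1). Then for every t ∈ Q_5 with v_5(t) = 0, the element 5·3·(t^2 + ᾱ) is a nonzero square in Q_5. -/
/-!
Clearing denominators, `4 · 15 (t² + ᾱ) = 60 t² + 42 - 6 s` is a `5`-adic integer (as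
`v₅(t) = 0`) whose residue is `42 - 6 · 3 ≡ 4 = 2² (mod 5)`, a nonzero square. For odd `p`,
Hensel's lemma applied to `X² - u` lifts a nonzero square root of the residue of `u` to `ℤ_[p]`.
-/

namespace PadicInt

variable {p : ℕ} [Fact p.Prime]

theorem norm_lt_one_iff_toZMod_eq_zero (z : ℤ_[p]) : ‖z‖ < 1 ↔ toZMod z = 0 := by
  rw [← RingHom.mem_ker, ker_toZMod, IsLocalRing.mem_maximalIdeal, mem_nonunits]

theorem norm_eq_one_iff_toZMod_ne_zero (z : ℤ_[p]) : ‖z‖ = 1 ↔ toZMod z ≠ 0 := by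
  rw [ne_eq, ← norm_lt_one_iff_toZMod_eq_zero, not_lt]
  exact ⟨ge_of_eq, (norm_le_one z).antisymm⟩

theorem isSquare_of_isSquare_toZMod_s13 (hp : p ≠ 2) {u : ℤ_[p]} (hu : toZMod u ≠ 0)
    (hsq : IsSquare (toZMod u)) : IsSquare u := by
  obtain ⟨a, ha⟩ := hsq
  set b : ℤ_[p] := (a.val : ℤ_[p])
  have hb : toZMod b = a := by simp [b]
  have h2 : (2 : ZMod p) ≠ 0 := Ring.two_ne_zero (by rwa [ZMod.ringChar_zmod_n])
  have ha0 : a ≠ 0 := by rintro rfl; simp_all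
  let F : Polynomial ℤ_[p] := Polynomial.X ^ 2 - Polynomial.C u
  have hF : ‖F.aeval b‖ < 1 := by
    rw [norm_lt_one_iff_toZMod_eq_zero]
    simp [F, hb, ha, sq]
  have hF' : ‖F.derivative.aeval b‖ = 1 := by
    have hder : F.derivative.aeval b = 2 * b := by simp [F, one_add_one_eq_two]
    rw [norm_eq_one_iff_toZMod_ne_zero, hder, map_mul, map_ofNat, hb]
    exact mul_ne_zero h2 ha0
  obtain ⟨z, hz, -⟩ := hensels_lemma (F := F) (a := b) (by rwa [hF', one_pow])
  exact ⟨z, by simpa [F, sub_eq_zero, sq, eq_comm] using hz⟩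

end PadicInt

theorem fifteen_t_sq_add_alphabar_square_general (s : ℤ_[5])
    (hs3 : PadicInt.toZMod s = 3) (t : ℚ_[5]) (ht : t.valuation = 0) :
    5 * 3 * (t ^ 2 + (7 - (s : ℚ_[5])) / 10) ≠ 0 ∧
      IsSquare (5 * 3 * (t ^ 2 + (7 - (s : ℚ_[5])) / 10)) := by
  set x : ℚ_[5] := 5 * 3 * (t ^ 2 + (7 - (s : ℚ_[5])) / 10)
  set τ : ℤ_[5] := ⟨t, (Padic.norm_le_one_iff_val_nonneg t).2 ht.ge⟩
  set u : ℤ_[5] := 60 * τ ^ 2 + 42 - 6 * s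
  have hu : (u : ℚ_[5]) = 4 * x := by
    change PadicInt.Coe.ringHom u = _
    simp only [u, map_sub, map_add, map_mul, map_pow, map_ofNat]
    change 60 * t ^ 2 + 42 - 6 * (s : ℚ_[5]) = _
    ring
  have hu4 : PadicInt.toZMod u = 4 := by
    simp only [u, map_sub, map_add, map_mul, map_pow, map_ofNat, hs3]
    reduce_mod_char
  have hu0 : PadicInt.toZMod u ≠ 0 := by rw [hu4]; decide
  obtain ⟨z, hz⟩ := PadicInt.isSquare_of_isSquare_toZMod_s13 (by norm_num) hu0 ⟨2, by rw [hu4]; decide⟩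
  have hx : 4 * x = z * z := by rw [← hu, hz, PadicInt.coe_mul]
  have hu_ne : u ≠ 0 := fun h ↦ hu0 (by rw [h, map_zero])
  refine ⟨fun hx0 ↦ hu_ne ?_, (z : ℚ_[5]) / 2, by linear_combination hx / 4⟩
  rw [← PadicInt.coe_eq_zero, hu, hx0, mul_zero]

/-- Let s ∈ ℤ₅ with s² = 29 and s ≡ 3 (mod 5), and ᾱ = (7−s)/10 ∈ ℚ₅ (so
v₅(ᾱ) = −1).  Then for every t ∈ ℚ₅ with t ≠ 0 and v₅(t) = 0, the element
5·3·(t² + ᾱ) is a nonzero square in ℚ₅. -/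
theorem fifteen_t_sq_add_alphabar_square (s : ℤ_[5]) (hs : s ^ 2 = 29)
    (hs3 : PadicInt.toZMod s = 3) (t : ℚ_[5]) (ht0 : t ≠ 0) (ht : t.valuation = 0) :
    5 * 3 * (t ^ 2 + (7 - (s : ℚ_[5])) / 10) ≠ 0 ∧
      IsSquare (5 * 3 * (t ^ 2 + (7 - (s : ℚ_[5])) / 10)) :=
  fifteen_t_sq_add_alphabar_square_general s hs3 t ht
end

section
/- For every t ∈ Q_5 with v_5(t) < 0, the element 5^{−4 v_5(t)}·(3/5)(5t^4+7t^2+1) is a unit congruent to 3 mod 5, and hence (3/5)(5t^4+7t^2+1) is not a norm from Q_5(√5), i.e. it is not of the form y^2 − 5z^2 with y, z ∈ Q_5. -/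
section aux

lemma val5 : (5 : ℚ_[5]).valuation = 1 := by
  have := Padic.valuation_p (p := 5)
  simpa using this

lemma valuation_pow5 (k : ℕ) : ((5 : ℚ_[5]) ^ k).valuation = k := by
  induction k with
  | zero => simpa using Padic.valuation_one
  | succ n ih =>
      rw [pow_succ, Padic.valuation_mul (pow_ne_zero _ (by norm_num)) (by norm_num), ih, val5]
      push_cast; ring

lemma valuation_neg5 (x : ℚ_[5]) (hx : x ≠ 0) : (-x).valuation = x.valuation := by
  have hm1 : ((-1 : ℚ_[5])).valuation = 0 := by
    have h : ((-1 : ℚ_[5]) * (-1)).valuation = (-1 : ℚ_[5]).valuation + (-1 : ℚ_[5]).valuation :=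
      Padic.valuation_mul (by norm_num) (by norm_num)
    simp only [neg_mul, one_mul, neg_neg] at h
    rw [Padic.valuation_one] at h
    omega
  have h2 : (-x) = (-1) * x := by ring
  rw [h2, Padic.valuation_mul (by norm_num) hx, hm1, zero_add]

lemma valuation_sq5 (x : ℚ_[5]) (hx : x ≠ 0) : (x ^ 2).valuation = 2 * x.valuation := by
  rw [sq, Padic.valuation_mul hx hx]; ring

lemma val_5mul (z : ℚ_[5]) (hz : z ≠ 0) :
    ((5 : ℚ_[5]) * z ^ 2).valuation = 1 + 2 * z.valuation := by
  rw [Padic.valuation_mul (by norm_num) (pow_ne_zero 2 hz), val5, valuation_sq5 z hz]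

lemma zmod5_fact : ∀ x w : ZMod 5, x ^ 2 - 5 * w ^ 2 ≠ 3 := by decide

lemma zmod5_pow4 : ∀ x : ZMod 5, x ≠ 0 → 3 * x ^ 4 = 3 := by decide

lemma toZMod_five : PadicInt.toZMod (5 : ℤ_[5]) = 0 := by
  rw [show (5 : ℤ_[5]) = ((5 : ℕ) : ℤ_[5]) by norm_num, map_natCast]
  decide

end aux

/-- For every t ∈ ℚ₅ with v₅(t) < 0, the element (3/5)(5t⁴ + 7t² + 1) is not of
the form y² − 5z² with y, z ∈ ℚ₅; moreover 5^(−4·v₅(t))·(3/5)(5t⁴+7t²+1) is a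
unit (an element of ℤ₅) congruent to 3 mod 5. -/
theorem not_norm_form_Q5 (t : ℚ_[5]) (ht : t.valuation < 0) :
    (∀ y z : ℚ_[5], y ^ 2 - 5 * z ^ 2 ≠ (3 / 5) * (5 * t ^ 4 + 7 * t ^ 2 + 1)) ∧
    (∃ u : ℤ_[5],
      (u : ℚ_[5]) = (5 : ℚ_[5]) ^ ((-4) * t.valuation) * ((3 / 5) * (5 * t ^ 4 + 7 * t ^ 2 + 1)) ∧
      PadicInt.toZMod u = 3) := by
  have ht0 : t ≠ 0 := by
    intro h; rw [h, Padic.valuation_zero] at ht; exact absurd ht (by norm_num)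
  obtain ⟨n, hn⟩ : ∃ n : ℕ, t.valuation = -((n : ℤ) + 1) := ⟨(-t.valuation - 1).toNat, by omega⟩
  set s : ℚ_[5] := 5 ^ (n + 1) * t with hs_def
  have hs0 : s ≠ 0 := mul_ne_zero (pow_ne_zero _ (by norm_num)) ht0
  have hsval : s.valuation = 0 := by
    rw [hs_def, Padic.valuation_mul (pow_ne_zero _ (by norm_num)) ht0, valuation_pow5, hn]
    push_cast; ring
  have hsnorm : ‖s‖ = 1 := by
    rw [Padic.norm_eq_zpow_neg_valuation hs0, hsval]; norm_num
  set S : ℤ_[5] := ⟨s, le_of_eq hsnorm⟩ with hS_def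
  have hScoe : (S : ℚ_[5]) = s := rfl
  set u : ℤ_[5] := 3 * S ^ 4 + 5 * (21 * 5 ^ (2 * n) * S ^ 2 + 3 * 5 ^ (4 * n + 2)) with hu_def
  have hucoe : (u : ℚ_[5]) =
      3 * s ^ 4 + 5 * (21 * 5 ^ (2 * n) * s ^ 2 + 3 * 5 ^ (4 * n + 2)) := by
    rw [hu_def]
    push_cast [hScoe, show ((3 : ℤ_[5]) : ℚ_[5]) = 3 from rfl,
      show ((5 : ℤ_[5]) : ℚ_[5]) = 5 from rfl,
      show ((21 : ℤ_[5]) : ℚ_[5]) = 21 from rfl]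
    ring
  have hexp : (5 : ℚ_[5]) ^ ((-4) * t.valuation) = (5 : ℚ_[5]) ^ (4 * n + 4 : ℕ) := by
    rw [hn]
    have h : (-4 : ℤ) * -((n : ℤ) + 1) = ((4 * n + 4 : ℕ) : ℤ) := by push_cast; ring
    rw [h, zpow_natCast]
  have hid : (u : ℚ_[5]) =
      (5 : ℚ_[5]) ^ ((-4) * t.valuation) * ((3 / 5) * (5 * t ^ 4 + 7 * t ^ 2 + 1)) := by
    rw [hucoe, hexp, hs_def]
    have h5 : (5 : ℚ_[5]) ≠ 0 := by norm_num
    field_simp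
    push_cast
    ring
  have hSunit : IsUnit S :=
    PadicInt.isUnit_iff.mpr (by rw [PadicInt.norm_def, hScoe]; exact hsnorm)
  have hSz : PadicInt.toZMod S ≠ 0 := by
    intro h
    have hmem : S ∈ IsLocalRing.maximalIdeal ℤ_[5] := by
      rw [← PadicInt.ker_toZMod]; exact h
    rw [IsLocalRing.mem_maximalIdeal, mem_nonunits_iff] at hmem
    exact hmem hSunit
  have hutoZ : PadicInt.toZMod u = 3 := by
    rw [hu_def]
    simp only [map_add, map_mul, map_pow, map_ofNat, show (5 : ZMod 5) = 0 by decide,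
      zero_mul, mul_zero, add_zero]
    exact zmod5_pow4 _ hSz
  refine ⟨?_, u, hid, hutoZ⟩
  -- first part
  intro y z hyz
  have huunit : IsUnit u := by
    by_contra h
    have hmem : u ∈ IsLocalRing.maximalIdeal ℤ_[5] := by
      rw [IsLocalRing.mem_maximalIdeal]; exact h
    rw [← PadicInt.ker_toZMod, RingHom.mem_ker, hutoZ] at hmem
    exact absurd hmem (by decide)
  have hunorm : ‖(u : ℚ_[5])‖ = 1 := by
    rw [← PadicInt.norm_def]; exact PadicInt.isUnit_iff.mp huunit
  have hune : (u : ℚ_[5]) ≠ 0 := by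
    intro h; rw [h, norm_zero] at hunorm; norm_num at hunorm
  have huval : (u : ℚ_[5]).valuation = 0 := by
    have h := Padic.norm_eq_zpow_neg_valuation hune
    rw [hunorm] at h
    have h2 : ((5 : ℕ) : ℝ) ^ (-(u : ℚ_[5]).valuation) = ((5 : ℕ) : ℝ) ^ (0 : ℤ) := by
      rw [← h]; norm_num
    have := zpow_right_injective₀ (by norm_num : (0:ℝ) < ((5:ℕ):ℝ))
      (by norm_num : ((5:ℕ):ℝ) ≠ 1) h2
    omega
  set Y : ℚ_[5] := 5 ^ (2 * n + 2) * y with hY_def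
  set Z : ℚ_[5] := 5 ^ (2 * n + 2) * z with hZ_def
  have hE : Y ^ 2 - 5 * Z ^ 2 = (u : ℚ_[5]) := by
    rw [hid, hexp, hY_def, hZ_def, ← hyz]; ring
  have hEne : Y ^ 2 - 5 * Z ^ 2 ≠ 0 := by rw [hE]; exact hune
  have hEval : (Y ^ 2 - 5 * Z ^ 2).valuation = 0 := by rw [hE]; exact huval
  -- show Y and Z have nonnegative valuation
  have hkey : 0 ≤ Y.valuation ∧ 0 ≤ Z.valuation := by
    by_cases hZ0 : Z = 0
    · by_cases hY0 : Y = 0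
      · exfalso; apply hEne; rw [hY0, hZ0]; ring
      · rw [hZ0] at hEval
        simp only [ne_eq, OfNat.ofNat_ne_zero, not_false_eq_true, zero_pow, mul_zero,
          sub_zero] at hEval
        rw [valuation_sq5 Y hY0] at hEval
        constructor
        · omega
        · rw [hZ0, Padic.valuation_zero]
    · by_cases hY0 : Y = 0
      · exfalso
        rw [hY0] at hEval
        have h : ((0:ℚ_[5]) ^ 2 - 5 * Z ^ 2) = -(5 * Z ^ 2) := by ring
        rw [h, valuation_neg5 _ (by
          intro hc
          have := mul_ne_zero (by norm_num : (5:ℚ_[5]) ≠ 0) (pow_ne_zero 2 hZ0)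
          exact this hc), val_5mul Z hZ0] at hEval
        omega
      · have hY2 : Y ^ 2 ≠ 0 := pow_ne_zero 2 hY0
        have h5Z2 : (5 : ℚ_[5]) * Z ^ 2 ≠ 0 :=
          mul_ne_zero (by norm_num) (pow_ne_zero 2 hZ0)
        have ha : (Y ^ 2).valuation = 2 * Y.valuation := valuation_sq5 Y hY0
        have hb : ((5:ℚ_[5]) * Z ^ 2).valuation = 1 + 2 * Z.valuation := val_5mul Z hZ0
        -- h1 : min a b ≤ 0
        have h1 : min ((Y^2).valuation) ((-(5 * Z^2) : ℚ_[5]).valuation) ≤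
            (Y ^ 2 + -(5 * Z ^ 2)).valuation :=
          Padic.le_valuation_add (by rw [← sub_eq_add_neg]; exact hEne)
        rw [← sub_eq_add_neg, hEval, valuation_neg5 _ h5Z2] at h1
        -- h2 : min 0 b ≤ a
        have h2 : min ((Y ^ 2 - 5 * Z ^ 2).valuation) ((5 * Z ^ 2 : ℚ_[5]).valuation) ≤
            ((Y ^ 2 - 5 * Z ^ 2) + 5 * Z ^ 2).valuation :=
          Padic.le_valuation_add (by rw [sub_add_cancel]; exact hY2)
        rw [sub_add_cancel, hEval] at h2
        -- h3 : min a 0 ≤ b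
        have h3 : min ((Y ^ 2).valuation) ((-(Y ^ 2 - 5 * Z ^ 2) : ℚ_[5]).valuation) ≤
            (Y ^ 2 + -(Y ^ 2 - 5 * Z ^ 2)).valuation :=
          Padic.le_valuation_add (by rw [show Y^2 + -(Y^2 - 5*Z^2) = 5*Z^2 by ring]; exact h5Z2)
        rw [show Y^2 + -(Y^2 - 5*Z^2) = 5*Z^2 by ring,
          valuation_neg5 _ hEne, hEval] at h3
        rw [ha, hb] at h1 h2 h3
        omega
  obtain ⟨hYv, hZv⟩ := hkey
  have hYn : ‖Y‖ ≤ 1 := (Padic.norm_le_one_iff_val_nonneg Y).mpr hYv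
  have hZn : ‖Z‖ ≤ 1 := (Padic.norm_le_one_iff_val_nonneg Z).mpr hZv
  set YI : ℤ_[5] := ⟨Y, hYn⟩ with hYI_def
  set ZI : ℤ_[5] := ⟨Z, hZn⟩ with hZI_def
  have heq : YI ^ 2 - 5 * ZI ^ 2 = u := by
    apply Subtype.ext
    push_cast
    exact hE
  have hcontra := congrArg PadicInt.toZMod heq
  rw [map_sub, map_mul, map_pow, map_pow, toZMod_five, hutoZ, zero_mul, sub_zero] at hcontra
  have h5 : ∀ x : ZMod 5, x ^ 2 ≠ 3 := by decide
  exact h5 _ hcontra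
end
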